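/- arXiv:1709.00067 — 7 statements merged into one kernel-verified Lean document; each statement's English description precedes it below -/
import Mathlib

section
/- Let A ∈ U(2,2) have 2×2 blocks a,b,c,d. For every skew-Hermitian M ∈ M₂(ℂ) such that cM+d is invertible, the matrix f_{1,A}(M) = (aM+b)(cM+d)⁻¹ is again skew-Hermitian. -/
open Matrix Complex

noncomputable section

abbrev M2 : Type := Matrix (Fin 2) (Fin 2) ℂ
abbrev M4 : Type := Matrix (Fin 2 ⊕ Fin 2) (Fin 2 ⊕ Fin 2) ℂ

/-- The Hermitian form of signature (2,2): `g = [[0,I₂],[I₂,0]]`. -/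
def gMat : M4 := fromBlocks 0 1 1 0

/-- if `A ∈ U(2,2)` with blocks `a,b,c,d` and `M` is skew-Hermitian with
`cM+d` invertible, then `f_{1,A}(M) = (aM+b)(cM+d)⁻¹` is skew-Hermitian. -/
theorem stmt1 (A : M4) (hA : Aᴴ * gMat * A = gMat) (M : M2) (hM : Mᴴ = -M)
    (h : IsUnit (A.toBlocks₂₁ * M + A.toBlocks₂₂)) :
    ((A.toBlocks₁₁ * M + A.toBlocks₁₂) * (A.toBlocks₂₁ * M + A.toBlocks₂₂)⁻¹)ᴴ
      = -((A.toBlocks₁₁ * M + A.toBlocks₁₂) * (A.toBlocks₂₁ * M + A.toBlocks₂₂)⁻¹) := by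
  set a := A.toBlocks₁₁ with ha
  set b := A.toBlocks₁₂ with hb
  set c := A.toBlocks₂₁ with hc
  set d := A.toBlocks₂₂ with hd
  have hA' : (fromBlocks a b c d)ᴴ * gMat * fromBlocks a b c d = gMat := by
    rw [ha, hb, hc, hd, fromBlocks_toBlocks]; exact hA
  rw [gMat, fromBlocks_conjTranspose, fromBlocks_multiply, fromBlocks_multiply] at hA'
  simp only [Matrix.mul_zero, Matrix.mul_one, zero_add, add_zero,
    Matrix.zero_mul, Matrix.one_mul] at hA'
  have h11 : aᴴ * c + cᴴ * a = 0 := by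
    have := congrArg Matrix.toBlocks₁₁ hA'
    simpa [toBlocks_fromBlocks₁₁, add_comm] using this
  have h12 : aᴴ * d + cᴴ * b = 1 := by
    have := congrArg Matrix.toBlocks₁₂ hA'
    simpa [toBlocks_fromBlocks₁₂, add_comm] using this
  have h21 : bᴴ * c + dᴴ * a = 1 := by
    have := congrArg Matrix.toBlocks₂₁ hA'
    simpa [toBlocks_fromBlocks₂₁, add_comm] using this
  have h22 : bᴴ * d + dᴴ * b = 0 := by
    have := congrArg Matrix.toBlocks₂₂ hA'
    simpa [toBlocks_fromBlocks₂₂, add_comm] using this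
  set Q := c * M + d with hQ
  set P := a * M + b with hP
  have key : Pᴴ * Q + Qᴴ * P = 0 := by
    have expand : Pᴴ * Q + Qᴴ * P
        = Mᴴ * (aᴴ * c + cᴴ * a) * M + Mᴴ * (aᴴ * d + cᴴ * b)
          + (bᴴ * c + dᴴ * a) * M + (bᴴ * d + dᴴ * b) := by
      rw [hP, hQ]
      simp only [conjTranspose_add, conjTranspose_mul]
      noncomm_ring
    rw [expand, h11, h12, h21, h22, hM]
    simp
  have hQu := h
  have hQQ : Q * Q⁻¹ = 1 := Matrix.mul_nonsing_inv Q ((Matrix.isUnit_iff_isUnit_det Q).mp hQu)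
  have hQQ' : Q⁻¹ * Q = 1 := Matrix.nonsing_inv_mul Q ((Matrix.isUnit_iff_isUnit_det Q).mp hQu)
  have hQH : Qᴴ * Q⁻¹ᴴ = 1 := by
    rw [← conjTranspose_mul, hQQ', conjTranspose_one]
  have hQH' : Q⁻¹ᴴ * Qᴴ = 1 := by
    rw [← conjTranspose_mul, hQQ, conjTranspose_one]
  have main : (P * Q⁻¹)ᴴ + P * Q⁻¹ = 0 := by
    have e1 : Q⁻¹ᴴ * (Pᴴ * Q + Qᴴ * P) * Q⁻¹
        = Q⁻¹ᴴ * Pᴴ * (Q * Q⁻¹) + Q⁻¹ᴴ * Qᴴ * (P * Q⁻¹) := by noncomm_ring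
    have : (P * Q⁻¹)ᴴ + P * Q⁻¹ = Q⁻¹ᴴ * (Pᴴ * Q + Qᴴ * P) * Q⁻¹ := by
      rw [conjTranspose_mul, e1, hQQ, hQH']; noncomm_ring
    rw [this, key]
    simp
  linear_combination (norm := noncomm_ring) main
end
end

section
/- Let A ∈ SU(2,2) have blocks a,b,c,d with d invertible, and suppose that for every skew-Hermitian M ∈ M₂(ℂ) with cM+d invertible one has (aM+b)(cM+d)⁻¹ = M. Then A ∈ {I₄, −I₄, iI₄, −iI₄}; i.e. the kernel of the homomorphism A ↦ f_{1,A} restricted to SU(2,2) is {±1, ±i} times the identity. -/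
open Matrix Complex

noncomputable section

/-- There is a nonzero real `t` with both `(tI)•c + d` and `(-tI)•c + d` invertible. -/
lemma exists_good_t (c d : M2) (hd : IsUnit d) :
    ∃ t : ℝ, t ≠ 0 ∧ IsUnit ((((t:ℂ) * Complex.I) • c + d)) ∧
      IsUnit (((-(t:ℂ) * Complex.I) • c + d)) := by
  classical
  set P : Polynomial ℂ :=
    ((Polynomial.X : Polynomial ℂ) • (Complex.I • c).map Polynomial.C + d.map Polynomial.C).det with hP
  have heval : ∀ z : ℂ, P.eval z = ((z * Complex.I) • c + d).det := by
    intro z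
    have h0 : Polynomial.eval z P =
        (((Polynomial.X : Polynomial ℂ) • (Complex.I • c).map Polynomial.C
          + d.map Polynomial.C).map (Polynomial.eval z)).det :=
      (Polynomial.evalRingHom z).map_det _
    rw [h0]
    congr 1
    ext i j
    simp [Matrix.smul_apply, Matrix.map_apply, smul_eq_mul]
    ring
  have hP0 : P ≠ 0 := by
    intro h0
    have := heval 0
    rw [h0] at this
    simp at this
    have hdd : IsUnit d.det := (Matrix.isUnit_iff_isUnit_det d).mp hd
    rw [← this] at hdd
    simp at hdd
  have hroots : {z : ℂ | P.IsRoot z}.Finite := Polynomial.finite_setOf_isRoot hP0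
  have h1 : {t : ℝ | P.IsRoot (t : ℂ)}.Finite :=
    hroots.preimage (fun x _ y _ hxy => by exact_mod_cast hxy)
  have h2 : {t : ℝ | P.IsRoot (-(t : ℂ))}.Finite :=
    hroots.preimage (fun x _ y _ hxy => by
      have : (x : ℂ) = y := by linear_combination -hxy
      exact_mod_cast this)
  have hbad : ({t : ℝ | P.IsRoot (t : ℂ)} ∪ {t : ℝ | P.IsRoot (-(t : ℂ))} ∪ {0}).Finite :=
    (h1.union h2).union (Set.finite_singleton 0)
  have hinf : (({t : ℝ | P.IsRoot (t : ℂ)} ∪ {t : ℝ | P.IsRoot (-(t : ℂ))} ∪ {0})ᶜ).Infinite :=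
    hbad.infinite_compl
  obtain ⟨t, ht⟩ := hinf.nonempty
  simp only [Set.mem_compl_iff, Set.mem_union, Set.mem_singleton_iff, Set.mem_setOf_eq,
    not_or] at ht
  obtain ⟨⟨ht1, ht2⟩, ht0⟩ := ht
  refine ⟨t, ht0, ?_, ?_⟩
  · rw [Matrix.isUnit_iff_isUnit_det, isUnit_iff_ne_zero, ← heval]
    exact ht1
  · rw [Matrix.isUnit_iff_isUnit_det, isUnit_iff_ne_zero]
    have : -(t:ℂ) * Complex.I = (-(t:ℂ)) * Complex.I := by ring
    rw [this, ← heval]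
    exact ht2

/-- A 2×2 matrix commuting with E₁₁ and with E₁₂ - E₂₁ is scalar. -/
lemma scalar_of_comm (a : M2)
    (h1 : a * !![(1:ℂ),0;0,0] = !![(1:ℂ),0;0,0] * a)
    (h2 : a * !![(0:ℂ),1;-1,0] = !![(0:ℂ),1;-1,0] * a) :
    a = a 0 0 • 1 := by
  rw [Matrix.eta_fin_two a] at h1 h2 ⊢
  rw [show (1 : M2) = !![(1:ℂ),0;0,1] from by ext i j; fin_cases i <;> fin_cases j <;> simp]
  simp only [Matrix.mul_fin_two, Matrix.smul_of, Matrix.smul_cons, smul_eq_mul,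
    Matrix.smul_empty] at h1 h2 ⊢
  have e1 := Matrix.ext_iff.mpr h1 0 1
  have e2 := Matrix.ext_iff.mpr h1 1 0
  have e3 := Matrix.ext_iff.mpr h2 0 1
  simp at e1 e2 e3
  ext i j
  fin_cases i <;> fin_cases j <;> simp [e2, e3, ← e1]

/-- if `A ∈ SU(2,2)` has blocks `a,b,c,d` with `d` invertible and
`f_{1,A}(M) = M` for every skew-Hermitian `M` with `cM+d` invertible, then
`A ∈ {I, −I, iI, −iI}`. -/
theorem stmt3 (A : M4) (hU : Aᴴ * gMat * A = gMat) (hdet : A.det = 1)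
    (hd : IsUnit A.toBlocks₂₂)
    (h : ∀ M : M2, Mᴴ = -M → IsUnit (A.toBlocks₂₁ * M + A.toBlocks₂₂) →
      (A.toBlocks₁₁ * M + A.toBlocks₁₂) * (A.toBlocks₂₁ * M + A.toBlocks₂₂)⁻¹ = M) :
    A = 1 ∨ A = -1 ∨ A = Complex.I • (1 : M4) ∨ A = -(Complex.I • (1 : M4)) := by
  set a := A.toBlocks₁₁ with ha
  set b := A.toBlocks₁₂ with hb
  set c := A.toBlocks₂₁ with hc
  set d := A.toBlocks₂₂ with hdd
  have hddet : IsUnit d.det := (Matrix.isUnit_iff_isUnit_det d).mp hd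
  have cancel : ∀ X Y Z : M2, IsUnit Y → X * Y⁻¹ = Z → X = Z * Y := by
    intro X Y Z hY hXZ
    have hYd := (Matrix.isUnit_iff_isUnit_det Y).mp hY
    calc X = X * (Y⁻¹ * Y) := by rw [Matrix.nonsing_inv_mul Y hYd, mul_one]
    _ = (X * Y⁻¹) * Y := by rw [mul_assoc]
    _ = Z * Y := by rw [hXZ]
  -- b = 0
  have hb0 : b = 0 := by
    have h0 := h 0 (by simp) (by simpa using hd)
    simp only [mul_zero, zero_add, add_zero] at h0
    have := cancel b d 0 hd h0
    simpa using this
  -- the key identity for scalar skew-Hermitian matrices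
  have key : ∀ z : ℂ, (starRingEnd ℂ) z = -z → IsUnit (z • c + d) →
      z • a = (z * z) • c + z • d := by
    intro z hz hu
    have hM : (z • (1 : M2))ᴴ = -(z • (1 : M2)) := by
      simp only [Matrix.conjTranspose_smul, Matrix.conjTranspose_one, Complex.star_def, hz,
        neg_smul]
    have hcu : IsUnit (c * (z • (1 : M2)) + d) := by
      rw [Matrix.mul_smul, mul_one]; exact hu
    have heq := cancel _ _ _ hcu (h (z • (1 : M2)) hM hcu)
    rw [hb0, add_zero, Matrix.mul_smul, mul_one, Matrix.mul_smul, mul_one,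
      Matrix.smul_mul, one_mul, smul_add, smul_smul] at heq
    exact heq
  -- c = 0
  obtain ⟨t, ht0, hu1, hu2⟩ := exists_good_t c d hd
  set u : ℂ := (t : ℂ) * Complex.I with hu
  have hzu : (starRingEnd ℂ) u = -u := by
    simp [hu, mul_comm]
  have hzu' : (starRingEnd ℂ) (-u) = -(-u) := by rw [map_neg, hzu, neg_neg]
  have hune : u ≠ 0 := mul_ne_zero (Complex.ofReal_ne_zero.mpr ht0) Complex.I_ne_zero
  have k1 := key u hzu hu1
  have k2 := key (-u) hzu' (by rwa [neg_mul] at hu2)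
  have e1 : u • a - u • d = (u * u) • c := by rw [k1]; abel
  have e2 : u • d - u • a = (u * u) • c := by
    simp only [neg_smul, neg_mul_neg] at k2
    rw [sub_eq_add_neg, k2]; abel
  have e3 : ((u * u) + (u * u)) • c = 0 := by
    rw [add_smul]
    nth_rewrite 1 [← e1]
    rw [← e2]; abel
  have hc0 : c = 0 := by
    rcases smul_eq_zero.mp e3 with h' | h'
    · exfalso
      have : u * u ≠ 0 := mul_ne_zero hune hune
      have h2 : (2 : ℂ) * (u * u) = 0 := by linear_combination h'
      simpa [this] using h2
    · exact h'
  -- a * M = M * d for all skew-Hermitian M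
  have hMd : ∀ M : M2, Mᴴ = -M → a * M = M * d := by
    intro M hM
    have hcu : IsUnit (c * M + d) := by rw [hc0, zero_mul, zero_add]; exact hd
    have := cancel _ _ _ hcu (h M hM hcu)
    rwa [hb0, add_zero, hc0, zero_mul, zero_add] at this
  -- a = d
  have had : a = d := by
    have hsI : (Complex.I • (1 : M2))ᴴ = -(Complex.I • (1 : M2)) := by
      simp only [Matrix.conjTranspose_smul, Matrix.conjTranspose_one, Complex.star_def,
        Complex.conj_I, neg_smul]
    have := hMd (Complex.I • 1) hsI
    rw [Matrix.mul_smul, mul_one, Matrix.smul_mul, one_mul] at this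
    exact smul_right_injective M2 Complex.I_ne_zero this
  have hcomm : ∀ M : M2, Mᴴ = -M → a * M = M * a := by
    intro M hM; rw [hMd M hM, ← had]
  -- a is scalar
  have hE1 : (Complex.I • !![(1:ℂ),0;0,0])ᴴ = -(Complex.I • !![(1:ℂ),0;0,0]) := by
    ext i j
    fin_cases i <;> fin_cases j <;>
      simp [Matrix.conjTranspose_apply, Complex.conj_I]
  have hE2 : (!![(0:ℂ),1;-1,0])ᴴ = -(!![(0:ℂ),1;-1,0]) := by
    ext i j
    fin_cases i <;> fin_cases j <;>
      simp [Matrix.conjTranspose_apply]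
  have hcomm1 : a * !![(1:ℂ),0;0,0] = !![(1:ℂ),0;0,0] * a := by
    have := hcomm _ hE1
    rw [Matrix.mul_smul, Matrix.smul_mul] at this
    exact smul_right_injective M2 Complex.I_ne_zero this
  have hcomm2 : a * !![(0:ℂ),1;-1,0] = !![(0:ℂ),1;-1,0] * a := hcomm _ hE2
  have ha2 : a = a 0 0 • 1 := scalar_of_comm a hcomm1 hcomm2
  set lam : ℂ := a 0 0 with hlam
  -- A is scalar
  have hA : A = lam • (1 : M4) := by
    have hA' : A = fromBlocks a b c d := (Matrix.fromBlocks_toBlocks A).symm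
    rw [hA', hb0, hc0, ← had, ha2,
      show (1 : M4) = fromBlocks 1 0 0 1 from Matrix.fromBlocks_one.symm,
      Matrix.fromBlocks_smul, smul_zero]
  -- determinant
  have hl4 : lam ^ 4 = 1 := by
    rw [hA, Matrix.det_smul, Matrix.det_one, mul_one] at hdet
    simpa using hdet
  have hfac : (lam - 1) * (lam + 1) * (lam - Complex.I) * (lam + Complex.I) = 0 := by
    linear_combination hl4 + (1 - lam ^ 2) * Complex.I_sq
  rcases mul_eq_zero.mp hfac with h' | h'
  · rcases mul_eq_zero.mp h' with h'' | h''
    · rcases mul_eq_zero.mp h'' with h3 | h3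
      · left; rw [hA, sub_eq_zero.mp h3, one_smul]
      · right; left
        rw [hA, show lam = -1 from by linear_combination h3, neg_smul, one_smul]
    · right; right; left
      rw [hA, sub_eq_zero.mp h'']
  · right; right; right
    rw [hA, show lam = -Complex.I from by linear_combination h', neg_smul]
end
end

section
/- The set H of elements of SU(2,2) whose upper-right 2×2 block vanishes is a subgroup of SU(2,2), and the map Θ : H → K defined on h = [[a,0],[c,(a†)⁻¹]] by Θ(h) = diag(λ^{-1/2} a, λ^{1/2} (a†)⁻¹), where λ = |det a|, is a well-defined group homomorphism from H into K. -/
open Matrix Complex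

noncomputable section

/-- `H = {A ∈ SU(2,2) : upper-right 2×2 block of A vanishes}`. -/
def Hset : Set M4 := {A | Aᴴ * gMat * A = gMat ∧ A.det = 1 ∧ A.toBlocks₁₂ = 0}

/-- `K = {diag(a, (a†)⁻¹) : a ∈ GL(2,ℂ), |det a| = 1}`. -/
def Kset : Set M4 :=
  {A | ∃ a : M2, IsUnit a ∧ ‖a.det‖ = 1 ∧ A = fromBlocks a 0 0 (aᴴ)⁻¹}

/-- `Θ([[a,0],[c,d]]) = diag(λ^{-1/2} a, λ^{1/2} d)` with `λ = |det a|`. -/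
def Theta (A : M4) : M4 :=
  fromBlocks ((Real.sqrt (‖(A.toBlocks₁₁).det‖))⁻¹ • A.toBlocks₁₁) 0
    0 (Real.sqrt (‖(A.toBlocks₁₁).det‖) • A.toBlocks₂₂)

/-! For `A = [[a,0],[c,d]]`, the upper-right block of `Aᴴ g A = g` reads `aᴴ d = 1`, so
`d = (aᴴ)⁻¹`, and rescaling `a` by `|det a|^{-1/2}` (and `d` by its inverse) makes `|det| = 1`:
this is why `Θ` lands in `K`. It is multiplicative because the diagonal blocks of block lower
triangular matrices multiply blockwise and `√|det|` is multiplicative. The group `H` is closed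
under inverses because `A⁻¹ = g Aᴴ g`, whose upper-right block is `(A₁₂)ᴴ = 0`. -/

section Isometry

variable {n R : Type*} [Fintype n] [CommSemiring R] [StarRing R] {J A B : Matrix n n R}

theorem conjTranspose_mul_mul_mul_of_isometry (hA : Aᴴ * J * A = J) (hB : Bᴴ * J * B = J) :
    (A * B)ᴴ * J * (A * B) = J :=
  calc (A * B)ᴴ * J * (A * B) = Bᴴ * (Aᴴ * J * A) * B := by
        simp only [conjTranspose_mul, mul_assoc]
    _ = J := by rw [hA, hB]

theorem conjTranspose_mul_mul_of_isometry_of_mul_eq_one [DecidableEq n] (hA : Aᴴ * J * A = J)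
    (hBA : B * A = 1) : Bᴴ * J * B = J :=
  calc Bᴴ * J * B = Bᴴ * (Aᴴ * J * A) * B := by rw [hA]
    _ = (A * B)ᴴ * J * (A * B) := by simp only [conjTranspose_mul, mul_assoc]
    _ = J := by rw [mul_eq_one_comm.mp hBA]; simp

end Isometry

section Blocks

variable {m n α : Type*}

theorem fromBlocks_toBlocks_of_toBlocks₁₂_eq_zero [Zero α] {A : Matrix (m ⊕ n) (m ⊕ n) α}
    (h : A.toBlocks₁₂ = 0) : fromBlocks A.toBlocks₁₁ 0 A.toBlocks₂₁ A.toBlocks₂₂ = A :=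
  h ▸ fromBlocks_toBlocks A

variable [Fintype m] [Fintype n] [NonUnitalNonAssocSemiring α] {A B : Matrix (m ⊕ n) (m ⊕ n) α}

theorem toBlocks₁₁_mul_of_toBlocks₁₂_eq_zero (hA : A.toBlocks₁₂ = 0) :
    (A * B).toBlocks₁₁ = A.toBlocks₁₁ * B.toBlocks₁₁ := by
  rw [← fromBlocks_toBlocks_of_toBlocks₁₂_eq_zero hA, ← fromBlocks_toBlocks B, fromBlocks_multiply]
  simp

theorem toBlocks₁₂_mul_of_toBlocks₁₂_eq_zero (hA : A.toBlocks₁₂ = 0) (hB : B.toBlocks₁₂ = 0) :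
    (A * B).toBlocks₁₂ = 0 := by
  rw [← fromBlocks_toBlocks_of_toBlocks₁₂_eq_zero hA, ← fromBlocks_toBlocks_of_toBlocks₁₂_eq_zero hB,
    fromBlocks_multiply]
  simp

theorem toBlocks₂₂_mul_of_toBlocks₁₂_eq_zero (hB : B.toBlocks₁₂ = 0) :
    (A * B).toBlocks₂₂ = A.toBlocks₂₂ * B.toBlocks₂₂ := by
  rw [← fromBlocks_toBlocks A, ← fromBlocks_toBlocks_of_toBlocks₁₂_eq_zero hB, fromBlocks_multiply]
  simp

end Blocks

theorem sqrt_norm_det_mul {n R : Type*} [Fintype n] [DecidableEq n] [NormedCommRing R]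
    [NormMulClass R] (a b : Matrix n n R) :
    √‖(a * b).det‖ = √‖a.det‖ * √‖b.det‖ := by
  rw [det_mul, norm_mul, Real.sqrt_mul (norm_nonneg _)]

theorem norm_det_inv_sqrt_norm_det_smul {𝕜 : Type*} [RCLike 𝕜] {a : Matrix (Fin 2) (Fin 2) 𝕜}
    (ha : a.det ≠ 0) : ‖((√‖a.det‖)⁻¹ • a).det‖ = 1 := by
  have hpos : 0 < ‖a.det‖ := norm_pos_iff.mpr ha
  rw [det_smul_of_tower, Fintype.card_fin, norm_smul, norm_pow, norm_inv, Real.norm_of_nonneg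
    (Real.sqrt_nonneg _), inv_pow, Real.sq_sqrt hpos.le, inv_mul_cancel₀ hpos.ne']

theorem gMat_mul_gMat : gMat * gMat = 1 := by
  simp [gMat, fromBlocks_multiply, ← fromBlocks_one]

theorem toBlocks₁₂_gMat_mul_mul_gMat (X : M4) : (gMat * X * gMat).toBlocks₁₂ = X.toBlocks₂₁ := by
  rw [← fromBlocks_toBlocks X]
  simp [gMat, fromBlocks_multiply]

theorem conjTranspose_toBlocks₁₁_mul_toBlocks₂₂_of_mem_Hset {A : M4} (hA : A ∈ Hset) :
    A.toBlocks₁₁ᴴ * A.toBlocks₂₂ = 1 := by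
  have h := congrArg toBlocks₁₂ hA.1
  rw [← fromBlocks_toBlocks_of_toBlocks₁₂_eq_zero hA.2.2] at h
  simpa [gMat, fromBlocks_conjTranspose, fromBlocks_multiply] using h

theorem one_mem_Hset : (1 : M4) ∈ Hset :=
  ⟨by simp, det_one, by rw [← fromBlocks_one, toBlocks_fromBlocks₁₂]⟩

theorem mul_mem_Hset {A B : M4} (hA : A ∈ Hset) (hB : B ∈ Hset) : A * B ∈ Hset :=
  ⟨conjTranspose_mul_mul_mul_of_isometry hA.1 hB.1, by rw [det_mul, hA.2.1, hB.2.1, one_mul],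
    toBlocks₁₂_mul_of_toBlocks₁₂_eq_zero hA.2.2 hB.2.2⟩

theorem gMat_mul_conjTranspose_mul_gMat_mul_of_mem_Hset {A : M4} (hA : A ∈ Hset) :
    gMat * Aᴴ * gMat * A = 1 :=
  calc gMat * Aᴴ * gMat * A = gMat * (Aᴴ * gMat * A) := by simp only [mul_assoc]
    _ = 1 := by rw [hA.1, gMat_mul_gMat]

theorem gMat_mul_conjTranspose_mul_gMat_mem_Hset {A : M4} (hA : A ∈ Hset) :
    gMat * Aᴴ * gMat ∈ Hset := by
  have hinv := gMat_mul_conjTranspose_mul_gMat_mul_of_mem_Hset hA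
  refine ⟨conjTranspose_mul_mul_of_isometry_of_mul_eq_one hA.1 hinv, ?_, ?_⟩
  · simpa [det_mul, hA.2.1] using congrArg det hinv
  · rw [toBlocks₁₂_gMat_mul_mul_gMat, ← fromBlocks_toBlocks_of_toBlocks₁₂_eq_zero hA.2.2]
    simp [fromBlocks_conjTranspose]

theorem theta_mem_Kset {A : M4} (h : A.toBlocks₁₁ᴴ * A.toBlocks₂₂ = 1) : Theta A ∈ Kset := by
  set a := A.toBlocks₁₁
  set s := √‖a.det‖
  have ha : a.det ≠ 0 := by
    have hdet := congrArg det h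
    rw [det_mul, det_conjTranspose, det_one] at hdet
    exact star_ne_zero.mp (left_ne_zero_of_mul_eq_one hdet)
  have hs : s ≠ 0 := Real.sqrt_ne_zero'.mpr (norm_pos_iff.mpr ha)
  have hnorm : ‖(s⁻¹ • a).det‖ = 1 := norm_det_inv_sqrt_norm_det_smul ha
  have hinv : ((s⁻¹ • a)ᴴ)⁻¹ = s • A.toBlocks₂₂ := by
    refine inv_eq_right_inv ?_
    rw [conjTranspose_smul, star_trivial, smul_mul_smul_comm, inv_mul_cancel₀ hs, one_smul, h]
  refine ⟨s⁻¹ • a, ?_, hnorm, by rw [hinv]; rfl⟩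
  exact (isUnit_iff_isUnit_det _).mpr (norm_ne_zero_iff.mp (hnorm ▸ one_ne_zero)).isUnit

theorem theta_mul {A B : M4} (hA : A.toBlocks₁₂ = 0) (hB : B.toBlocks₁₂ = 0) :
    Theta (A * B) = Theta A * Theta B := by
  simp only [Theta, fromBlocks_multiply, toBlocks₁₁_mul_of_toBlocks₁₂_eq_zero hA,
    toBlocks₂₂_mul_of_toBlocks₁₂_eq_zero hB, sqrt_norm_det_mul, mul_inv, mul_zero, zero_mul,
    add_zero, zero_add, smul_mul_smul_comm]

/-- `H` is a subgroup of `SU(2,2)` and `Θ : H → K` is a well-defined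
group homomorphism. -/
theorem stmt5 :
    (1 : M4) ∈ Hset ∧
    (∀ A ∈ Hset, ∀ B ∈ Hset, A * B ∈ Hset) ∧
    (∀ A ∈ Hset, ∃ B ∈ Hset, A * B = 1 ∧ B * A = 1) ∧
    (∀ A ∈ Hset, Theta A ∈ Kset) ∧
    (∀ A ∈ Hset, ∀ B ∈ Hset, Theta (A * B) = Theta A * Theta B) :=
  ⟨one_mem_Hset, fun _ hA _ hB => mul_mem_Hset hA hB,
    fun _ hA => ⟨_, gMat_mul_conjTranspose_mul_gMat_mem_Hset hA,
      mul_eq_one_comm.mp (gMat_mul_conjTranspose_mul_gMat_mul_of_mem_Hset hA),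
      gMat_mul_conjTranspose_mul_gMat_mul_of_mem_Hset hA⟩,
    fun _ hA => theta_mem_Kset (conjTranspose_toBlocks₁₁_mul_toBlocks₂₂_of_mem_Hset hA),
    fun _ hA _ hB => theta_mul hA.2.2 hB.2.2⟩
end
end

section
/- The map φ : SL(2,ℂ) × U(1) → K defined by φ(s, μ) = diag(μs, μ(s†)⁻¹) (a block-diagonal 4×4 matrix) is a surjective group homomorphism onto K whose kernel is the two-element subgroup {(I₂, 1), (−I₂, −1)}. -/
open Matrix Complex

noncomputable section

/-- `φ(s, μ) = diag(μs, μ(s†)⁻¹)`. -/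
def phiMap (s : M2) (μ : ℂ) : M4 := fromBlocks (μ • s) 0 0 (μ • (sᴴ)⁻¹)

/-! `φ(s, μ) = diag(a, (a†)⁻¹)` with `a = μ s`: a unit scalar passes unchanged through `(·†)⁻¹`,
because `(conj μ)⁻¹ = μ`. Surjectivity takes `μ` a square root of `det a`, which has modulus one,
and `s = μ⁻¹ a`. In the kernel `μ s = 1`, and taking determinants gives `μ² = 1`. -/

lemma ne_zero_of_norm_eq_one {E : Type*} [NormedAddGroup E] {x : E} (hx : ‖x‖ = 1) : x ≠ 0 :=
  norm_ne_zero_iff.mp (by rw [hx]; exact one_ne_zero)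

lemma Matrix.conjTranspose_smul_inv_of_norm_eq_one {n : Type*} [Fintype n] [DecidableEq n]
    {μ : ℂ} (hμ : ‖μ‖ = 1) {A : Matrix n n ℂ} (hA : IsUnit A.det) :
    ((μ • A)ᴴ)⁻¹ = μ • (Aᴴ)⁻¹ := by
  have hμ0 : star μ ≠ 0 := star_ne_zero.mpr (ne_zero_of_norm_eq_one hμ)
  have hAH : IsUnit Aᴴ.det := by rwa [det_conjTranspose, isUnit_star]
  let := invertibleOfNonzero hμ0
  rw [conjTranspose_smul, Matrix.inv_smul _ _ hAH, invOf_eq_inv, star_def, ← inv_eq_conj hμ, inv_inv]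

lemma phiMap_eq_fromBlocks {s : M2} {μ : ℂ} (hs : IsUnit s.det) (hμ : ‖μ‖ = 1) :
    phiMap s μ = fromBlocks (μ • s) 0 0 ((μ • s)ᴴ)⁻¹ := by
  rw [phiMap, conjTranspose_smul_inv_of_norm_eq_one hμ hs]

lemma phiMap_mem_Kset {s : M2} {μ : ℂ} (hs : ‖s.det‖ = 1) (hμ : ‖μ‖ = 1) :
    phiMap s μ ∈ Kset := by
  have hdet : (μ • s).det = μ ^ 2 * s.det := by simp
  have hnorm : ‖(μ • s).det‖ = 1 := by rw [hdet, norm_mul, norm_pow, hμ, hs, one_pow, one_mul]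
  have hunit : IsUnit s.det := (ne_zero_of_norm_eq_one hs).isUnit
  refine ⟨μ • s, ?_, hnorm, phiMap_eq_fromBlocks hunit hμ⟩
  exact (isUnit_iff_isUnit_det _).mpr (ne_zero_of_norm_eq_one hnorm).isUnit

lemma phiMap_mul (s t : M2) (μ ν : ℂ) : phiMap (s * t) (μ * ν) = phiMap s μ * phiMap t ν := by
  simp only [phiMap, fromBlocks_multiply, conjTranspose_mul, Matrix.mul_inv_rev, smul_mul_smul_comm,
    mul_zero, zero_mul, add_zero, zero_add]

lemma exists_phiMap_eq_of_mem_Kset {A : M4} (hA : A ∈ Kset) :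
    ∃ (s : M2) (μ : ℂ), s.det = 1 ∧ ‖μ‖ = 1 ∧ phiMap s μ = A := by
  obtain ⟨a, -, hdet, rfl⟩ := hA
  obtain ⟨μ, hμsq⟩ := IsAlgClosed.exists_pow_nat_eq a.det two_pos
  have hμ : ‖μ‖ = 1 := by
    have h : ‖μ‖ ^ 2 = 1 := by rw [← norm_pow, hμsq, hdet]
    nlinarith [norm_nonneg μ]
  have hμ0 : μ ≠ 0 := ne_zero_of_norm_eq_one hμ
  have hs : μ • μ⁻¹ • a = a := by rw [smul_smul, mul_inv_cancel₀ hμ0, one_smul]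
  have hsdet : (μ⁻¹ • a).det = 1 := by
    rw [det_smul, Fintype.card_fin, inv_pow, ← hμsq, inv_mul_cancel₀ (pow_ne_zero 2 hμ0)]
  refine ⟨μ⁻¹ • a, μ, hsdet, hμ, ?_⟩
  rw [phiMap_eq_fromBlocks (by rw [hsdet]; exact isUnit_one) hμ, hs]

lemma phiMap_eq_one_iff {s : M2} {μ : ℂ} (hs : IsUnit s.det) (hμ : ‖μ‖ = 1) :
    phiMap s μ = 1 ↔ μ • s = 1 := by
  rw [phiMap_eq_fromBlocks hs hμ, ← fromBlocks_one, fromBlocks_inj]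
  exact ⟨And.left, fun h ↦ by simp [h]⟩

lemma Matrix.smul_eq_one_iff_of_det_eq_one {K : Type*} [Field K] {s : Matrix (Fin 2) (Fin 2) K}
    {μ : K} (hs : s.det = 1) : μ • s = 1 ↔ (s = 1 ∧ μ = 1) ∨ (s = -1 ∧ μ = -1) := by
  constructor
  · intro h
    have hμsq : μ * μ = 1 := by
      simpa [det_smul, hs, sq] using congrArg det h
    rcases mul_self_eq_one_iff.mp hμsq with rfl | rfl
    · exact Or.inl ⟨by simpa using h, rfl⟩
    · exact Or.inr ⟨by rw [← neg_neg s, ← neg_one_smul K s, h], rfl⟩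
  · rintro (⟨rfl, rfl⟩ | ⟨rfl, rfl⟩) <;> simp

/-- `φ : SL(2,ℂ) × U(1) → K`, `φ(s,μ) = diag(μs, μ(s†)⁻¹)`, is a surjective
group homomorphism onto `K` with kernel `{(I₂,1), (−I₂,−1)}`. -/
theorem stmt6 :
    (∀ (s : M2) (μ : ℂ), s.det = 1 → ‖μ‖ = 1 → phiMap s μ ∈ Kset) ∧
    (∀ (s t : M2) (μ ν : ℂ), s.det = 1 → t.det = 1 → ‖μ‖ = 1 → ‖ν‖ = 1 →
      phiMap (s * t) (μ * ν) = phiMap s μ * phiMap t ν) ∧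
    (∀ A ∈ Kset, ∃ (s : M2) (μ : ℂ), s.det = 1 ∧ ‖μ‖ = 1 ∧ phiMap s μ = A) ∧
    (∀ (s : M2) (μ : ℂ), s.det = 1 → ‖μ‖ = 1 →
      (phiMap s μ = 1 ↔ (s = 1 ∧ μ = 1) ∨ (s = -1 ∧ μ = -1))) := by
  refine ⟨fun s μ hs hμ ↦ phiMap_mem_Kset (by simp [hs]) hμ,
    fun s t μ ν _ _ _ _ ↦ phiMap_mul s t μ ν,
    fun A hA ↦ exists_phiMap_eq_of_mem_Kset hA, fun s μ hs hμ ↦ ?_⟩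
  rw [phiMap_eq_one_iff (by simp [hs]) hμ, smul_eq_one_iff_of_det_eq_one hs]
end
end

section
/- For every skew-Hermitian M ∈ M₂(ℂ), the 4×4 matrix Σ(M) = [[0, −M],[−π(M), 0]] (in 2×2 blocks) satisfies Σ(M)†g + gΣ(M) = 0, where g = [[0,I₂],[I₂,0]], and tr(Σ(M)) = 0; hence Σ maps u(2) into the Lie algebra su(2,2). -/
open Matrix Complex

noncomputable section

/-- The Pauli matrices `σ₀ = I₂, σ₁, σ₂, σ₃`. -/
def pauli : Fin 4 → M2
  | 0 => 1
  | 1 => !![0, 1; 1, 0]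
  | 2 => !![0, -Complex.I; Complex.I, 0]
  | 3 => !![1, 0; 0, -1]

/-- `M(x) = i (x⁰σ₀ + x¹σ₁ + x²σ₂ + x³σ₃)`. -/
def Mmap (x : Fin 4 → ℝ) : M2 := Complex.I • ∑ μ : Fin 4, (x μ : ℂ) • pauli μ

/-- The parity operator on coordinates: `π(M(x)) = M(P x)`. -/
def Pmap (x : Fin 4 → ℝ) : Fin 4 → ℝ := ![x 0, -x 1, -x 2, -x 3]

/-- `Σ(M(x)) = [[0, −M(x)],[−π(M(x)), 0]]` in 2×2 blocks. -/
def SigMap (x : Fin 4 → ℝ) : M4 := fromBlocks 0 (-(Mmap x)) (-(Mmap (Pmap x))) 0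

lemma Mmap_skew (x : Fin 4 → ℝ) : (Mmap x)ᴴ = -Mmap x := by
  ext i j
  fin_cases i <;> fin_cases j <;>
    simp [Mmap, Fin.sum_univ_four, pauli, Complex.ext_iff, Matrix.one_apply] <;> ring

/-- for every skew-Hermitian `M = M(x)`, `Σ(M)†g + gΣ(M) = 0` and
`tr(Σ(M)) = 0`; hence `Σ` maps u(2) into `su(2,2)`. (Every skew-Hermitian matrix is
of the form `M(x)`.) -/
theorem stmt10 :
    (∀ A : M2, Aᴴ = -A → ∃ x : Fin 4 → ℝ, Mmap x = A) ∧
    (∀ x : Fin 4 → ℝ,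
      (SigMap x)ᴴ * gMat + gMat * SigMap x = 0 ∧ (SigMap x).trace = 0) := by
  constructor
  · intro A hA
    have h := fun i j => congrFun (congrFun hA i) j
    simp only [conjTranspose_apply, neg_apply] at h
    have h00 := h 0 0; have h11 := h 1 1; have h01 := h 1 0
    rw [Complex.ext_iff] at h00 h11 h01
    simp [Complex.ext_iff] at h00 h11 h01
    refine ⟨![(A 0 0).im/2 + (A 1 1).im/2, (A 0 1).im, (A 0 1).re,
      (A 0 0).im/2 - (A 1 1).im/2], ?_⟩
    ext i j
    fin_cases i <;> fin_cases j <;>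
      simp [Mmap, Fin.sum_univ_four, pauli, Complex.ext_iff, Matrix.one_apply] <;>
      obtain ⟨h01a, h01b⟩ := h01 <;>
      first | (constructor <;> linarith) | linarith
  · intro x
    constructor
    · have h1 := Mmap_skew x
      have h2 := Mmap_skew (Pmap x)
      simp [SigMap, gMat, fromBlocks_conjTranspose, fromBlocks_multiply,
        fromBlocks_add, h1, h2]
    · simp [SigMap, Matrix.trace, Fintype.sum_sum_type, fromBlocks, Matrix.diag]
end
end

section
/- Let a ∈ GL(2,ℂ) with |det a| = 1 and let κ = diag(a, (a†)⁻¹) ∈ K. Then for every skew-Hermitian M ∈ M₂(ℂ), κ Σ(M) κ⁻¹ = Σ(a M a†). In other words, Σ is an intertwining operator between the standard action of K on u(2) ≅ ℝ⁴ (by M ↦ aMa†) and the adjoint action of K on su(2,2). -/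
open Matrix Complex

noncomputable section

/-!
For a `2 × 2` matrix the parity map is the adjugate, `π(M) = tr M - M = adj M`. Since the adjugate
is multiplicative and `adj a = det a • a⁻¹`, we get `π(a M a†) = |det a|² (a†)⁻¹ π(M) a⁻¹`, and
`|det a| = 1` makes this exactly the lower block of `κ Σ(M) κ⁻¹`, whose upper block is `a M a†`.
-/

lemma Mmap_Pmap (x : Fin 4 → ℝ) : Mmap (Pmap x) = (Mmap x).adjugate := by
  ext i j
  fin_cases i <;> fin_cases j <;>
    simp [Mmap, Pmap, pauli, Fin.sum_univ_four, adjugate_fin_two] <;> ring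

namespace Matrix

variable {n m α : Type*} [Fintype n] [DecidableEq n]

theorem adjugate_eq_det_smul_nonsing_inv [CommRing α] {A : Matrix n n α} (h : IsUnit A.det) :
    A.adjugate = A.det • A⁻¹ := by
  rw [nonsing_inv_apply A h, smul_smul, IsUnit.mul_val_inv, one_smul]

theorem adjugate_mul_mul_conjTranspose [Field α] [StarRing α] (A M : Matrix n n α)
    (hA : star A.det * A.det = 1) : adjugate (A * M * Aᴴ) = Aᴴ⁻¹ * adjugate M * A⁻¹ := by
  have hdet : IsUnit A.det := (right_ne_zero_of_mul_eq_one hA).isUnit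
  have hdetH : IsUnit Aᴴ.det := by rw [det_conjTranspose]; exact hdet.star
  rw [adjugate_mul_distrib, adjugate_mul_distrib, adjugate_eq_det_smul_nonsing_inv hdet,
    adjugate_eq_det_smul_nonsing_inv hdetH, det_conjTranspose, smul_mul_assoc, Matrix.mul_smul,
    Matrix.mul_smul, smul_smul, hA, one_smul, Matrix.mul_assoc]

variable [Fintype m]

theorem inv_fromBlocks_zero_zero [DecidableEq m] [CommRing α] {A : Matrix n n α}
    {D : Matrix m m α} (hAD : IsUnit A ↔ IsUnit D) :
    (fromBlocks A 0 0 D)⁻¹ = fromBlocks A⁻¹ 0 0 D⁻¹ := by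
  rw [inv_fromBlocks_zero₂₁_of_isUnit_iff _ _ _ hAD, Matrix.mul_zero, Matrix.zero_mul, neg_zero]

theorem fromBlocks_diag_mul_offDiag_mul_diag [Ring α] (A A' : Matrix n n α)
    (D D' : Matrix m m α) (B : Matrix n m α) (C : Matrix m n α) :
    fromBlocks A 0 0 D * fromBlocks 0 B C 0 * fromBlocks A' 0 0 D' =
      fromBlocks 0 (A * B * D') (D * C * A') 0 := by
  simp [fromBlocks_multiply, Matrix.mul_assoc]

end Matrix

theorem stmt11_general (a : M2) (hdet : ‖a.det‖ = 1)
    (x y : Fin 4 → ℝ) (h : a * Mmap x * aᴴ = Mmap y) :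
    fromBlocks a 0 0 (aᴴ)⁻¹ * SigMap x * (fromBlocks a 0 0 (aᴴ)⁻¹ : M4)⁻¹ = SigMap y := by
  have hdet' : star a.det * a.det = 1 := by rw [star_def, conj_mul', hdet]; norm_num
  have hdetH : IsUnit aᴴ.det := by
    rw [det_conjTranspose]; exact (right_ne_zero_of_mul_eq_one hdet').isUnit.star
  have hκ_inv : (fromBlocks a 0 0 aᴴ⁻¹ : M4)⁻¹ = fromBlocks a⁻¹ 0 0 aᴴ := by
    rw [inv_fromBlocks_zero_zero (by rw [isUnit_nonsing_inv_iff, isUnit_conjTranspose]),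
      nonsing_inv_nonsing_inv _ hdetH]
  have hπ : aᴴ⁻¹ * Mmap (Pmap x) * a⁻¹ = Mmap (Pmap y) := by
    rw [Mmap_Pmap, Mmap_Pmap, ← h, adjugate_mul_mul_conjTranspose _ _ hdet']
  rw [hκ_inv, SigMap, SigMap, fromBlocks_diag_mul_offDiag_mul_diag]
  simp only [Matrix.mul_neg, Matrix.neg_mul, h, hπ]

/-- for `a ∈ GL(2,ℂ)` with `|det a| = 1`, `κ = diag(a,(a†)⁻¹) ∈ K`, and
every skew-Hermitian `M = M(x)` with `a M a† = M(y)`: `κ Σ(M) κ⁻¹ = Σ(a M a†)`;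
i.e. `Σ` intertwines the standard action of `K` on u(2) ≅ ℝ⁴ with the adjoint action
of `K` on su(2,2). -/
theorem stmt11 (a : M2) (ha : IsUnit a) (hdet : ‖a.det‖ = 1)
    (x y : Fin 4 → ℝ) (h : a * Mmap x * aᴴ = Mmap y) :
    fromBlocks a 0 0 (aᴴ)⁻¹ * SigMap x * (fromBlocks a 0 0 (aᴴ)⁻¹ : M4)⁻¹ = SigMap y :=
  stmt11_general a hdet x y h
end
end

section
/- Let A ∈ U(2,2) have blocks [[a,b],[c,d]], let q ∈ M₂(ℂ) be skew-Hermitian with cq+d invertible, and set p = (aq+b)(cq+d)⁻¹ and a' = a − pc. Then (a')†(cq+d) = I₂ (so that [[a',0],[c,cq+d]] has the block form of an element of H), and the derivative of the map f_{1,A} : M ↦ (aM+b)(cM+d)⁻¹ at q is the linear map N ↦ a' N (a')† on M₂(ℂ). -/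
open Matrix Complex

noncomputable section

attribute [local instance] Matrix.normedAddCommGroup Matrix.normedSpace

/-!
Put `P = a q + b` and `S = c q + d`, so that `A [q; 1] = [P; S]` and `A [1; 0] = [a; c]`.
Since `A` preserves the form `⟨X, Y⟩ = X₁ᴴ Y₂ + X₂ᴴ Y₁` defined by `g`, and `q` is skew-Hermitian,
`PᴴS + SᴴP = ⟨[q; 1], [q; 1]⟩ = qᴴ + q = 0` and `aᴴS + cᴴP = ⟨[1; 0], [q; 1]⟩ = 1`. Hence
`(a - P S⁻¹ c)ᴴ S = aᴴS - cᴴ S⁻ᴴ (PᴴS) = aᴴS + cᴴ S⁻ᴴ Sᴴ P = 1`, i.e. `S⁻¹ = (a - P S⁻¹ c)ᴴ`.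
In any Banach algebra the product rule and `d(X⁻¹) = -X⁻¹ dX X⁻¹` show that
`N ↦ (a N + b)(c N + d)⁻¹` has derivative `N ↦ (a - P S⁻¹ c) N S⁻¹` at `q`.
-/

theorem map_ringInverse {F M₀ N₀ : Type*} [MonoidWithZero M₀] [MonoidWithZero N₀]
    [EquivLike F M₀ N₀] [MulEquivClass F M₀ N₀] (f : F) (x : M₀) :
    f (Ring.inverse x) = Ring.inverse (f x) := by
  by_cases hx : IsUnit x
  · obtain ⟨u, rfl⟩ := hx
    rw [Ring.inverse_unit]
    exact (Ring.inverse_unit (Units.map (f : M₀ →* N₀) u)).symm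
  · rw [Ring.inverse_non_unit x hx, Ring.inverse_non_unit _ ((isUnit_map_iff f x).not.mpr hx),
      map_zero]

open ContinuousLinearMap in
theorem hasFDerivAt_linearFractional {𝕜 R : Type*} [NontriviallyNormedField 𝕜] [NormedRing R]
    [NormedAlgebra 𝕜 R] [HasSummableGeomSeries R] (a b c d x : R) (hx : IsUnit (c * x + d)) :
    HasFDerivAt (fun N => (a * N + b) * Ring.inverse (c * N + d))
      (mulLeftRight 𝕜 R (a - (a * x + b) * Ring.inverse (c * x + d) * c)
        (Ring.inverse (c * x + d))) x := by
  have hnum : HasFDerivAt (fun N => a * N + b) (mul 𝕜 R a) x :=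
    ((mul 𝕜 R a).hasFDerivAt).add_const b
  have hden : HasFDerivAt (fun N => c * N + d) (mul 𝕜 R c) x :=
    ((mul 𝕜 R c).hasFDerivAt).add_const d
  have hinv : HasFDerivAt Ring.inverse
      (-mulLeftRight 𝕜 R (Ring.inverse (c * x + d)) (Ring.inverse (c * x + d))) (c * x + d) := by
    simpa [← Ring.inverse_unit, hx.unit_spec] using hasFDerivAt_ringInverse (𝕜 := 𝕜) hx.unit
  refine (hnum.mul' (hinv.comp x hden)).congr_fderiv ?_
  ext N
  simp only [neg_comp, smul_neg, Function.comp_apply, _root_.add_apply, _root_.neg_apply,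
    _root_.smul_apply, ContinuousLinearMap.comp_apply, mul_apply', mulLeftRight_apply, smul_eq_mul,
    MulOpposite.smul_eq_mul_unop, MulOpposite.unop_op, map_sub, _root_.sub_apply]
  noncomm_ring

theorem LinearEquiv.exists_hasFDerivAt_of_conj {𝕜 E F : Type*} [NontriviallyNormedField 𝕜]
    [CompleteSpace 𝕜] [NormedAddCommGroup E] [NormedSpace 𝕜 E] [FiniteDimensional 𝕜 E]
    [NormedAddCommGroup F] [NormedSpace 𝕜 F]
    (e : E ≃ₗ[𝕜] F) {f : E → E} {g : F → F} {g' : F →L[𝕜] F} {x : E}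
    (hfg : ∀ y, e (f y) = g (e y)) (hg : HasFDerivAt g g' (e x)) :
    ∃ L : E →L[𝕜] E, HasFDerivAt f L x ∧ ∀ y, e (L y) = g' (e y) := by
  let e' := e.toContinuousLinearEquiv
  refine ⟨(e'.symm : F →L[𝕜] E) ∘L g' ∘L (e' : E →L[𝕜] F), ?_, fun y => by simp [e']⟩
  have hf : f = e'.symm ∘ g ∘ e' := funext fun y => by simp [e', ← hfg]
  exact hf ▸ e'.symm.hasFDerivAt.comp x (hg.comp x e'.hasFDerivAt)

namespace Matrix

section Form

variable {n m k α : Type*} [Fintype n] [Ring α] [StarRing α]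

theorem conjTranspose_mul_mul_mul_of_isometry {G A : Matrix n n α} (hA : Aᴴ * G * A = G)
    (X : Matrix n m α) (Y : Matrix n k α) :
    (A * X)ᴴ * G * (A * Y) = Xᴴ * G * Y := by
  calc (A * X)ᴴ * G * (A * Y) = Xᴴ * (Aᴴ * G * A) * Y := by
        simp only [conjTranspose_mul, Matrix.mul_assoc]
    _ = Xᴴ * G * Y := by rw [hA]

variable [DecidableEq n]

theorem conjTranspose_fromRows_mul_fromBlocks_zero_one_one_zero_mul_fromRows
    (x₁ x₂ : Matrix n m α) (y₁ y₂ : Matrix n k α) :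
    (fromRows x₁ x₂)ᴴ * (fromBlocks 0 1 1 0 : Matrix (n ⊕ n) (n ⊕ n) α) * fromRows y₁ y₂ =
      x₁ᴴ * y₂ + x₂ᴴ * y₁ := by
  rw [conjTranspose_fromRows_eq_fromCols_conjTranspose, Matrix.mul_assoc, fromBlocks_mul_fromRows,
    fromCols_mul_fromRows]
  simp

variable {a b c d : Matrix n n α}
  (hA : (fromBlocks a b c d)ᴴ * fromBlocks 0 1 1 0 * fromBlocks a b c d = fromBlocks 0 1 1 0)
include hA

theorem conjTranspose_mul_add_conjTranspose_mul_eq_zero {q : Matrix n n α} (hq : qᴴ = -q) :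
    (a * q + b)ᴴ * (c * q + d) + (c * q + d)ᴴ * (a * q + b) = 0 := by
  have := conjTranspose_mul_mul_mul_of_isometry hA (fromRows q 1) (fromRows q 1)
  rw [fromBlocks_mul_fromRows, conjTranspose_fromRows_mul_fromBlocks_zero_one_one_zero_mul_fromRows,
    conjTranspose_fromRows_mul_fromBlocks_zero_one_one_zero_mul_fromRows] at this
  simpa [hq] using this

theorem conjTranspose_mul_add_conjTranspose_mul_eq_one (q : Matrix n n α) :
    aᴴ * (c * q + d) + cᴴ * (a * q + b) = 1 := by
  have := conjTranspose_mul_mul_mul_of_isometry hA (fromRows (1 : Matrix n n α) 0) (fromRows q 1)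
  rw [fromBlocks_mul_fromRows, fromBlocks_mul_fromRows,
    conjTranspose_fromRows_mul_fromBlocks_zero_one_one_zero_mul_fromRows,
    conjTranspose_fromRows_mul_fromBlocks_zero_one_one_zero_mul_fromRows] at this
  simpa [add_comm] using this

end Form

theorem conjTranspose_sub_mul_inv_mul_mul_eq_one {n α : Type*} [Fintype n] [DecidableEq n]
    [CommRing α] [StarRing α] {a c P S : Matrix n n α} (hS : IsUnit S)
    (hiso : Pᴴ * S + Sᴴ * P = 0) (hpair : aᴴ * S + cᴴ * P = 1) :
    (a - P * S⁻¹ * c)ᴴ * S = 1 := by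
  have hSinv : S⁻¹ᴴ * Sᴴ = 1 := by
    rw [← conjTranspose_mul, mul_nonsing_inv _ ((isUnit_iff_isUnit_det S).mp hS), conjTranspose_one]
  calc (a - P * S⁻¹ * c)ᴴ * S = aᴴ * S - cᴴ * S⁻¹ᴴ * (Pᴴ * S) := by
        simp only [conjTranspose_sub, conjTranspose_mul]; noncomm_ring
    _ = aᴴ * S + cᴴ * (S⁻¹ᴴ * Sᴴ) * P := by
        rw [eq_neg_of_add_eq_zero_left hiso]; noncomm_ring
    _ = 1 := by rw [hSinv, Matrix.mul_one, hpair]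

/-- The entrywise norm on matrices is not submultiplicative, so the derivative is computed in the
Banach algebra of operators on Euclidean space and transported back along `toEuclideanCLM`. -/
theorem hasFDerivAt_linearFractional {𝕜 n : Type*} [RCLike 𝕜] [Fintype n] [DecidableEq n]
    (a b c d x : Matrix n n 𝕜) (hx : IsUnit (c * x + d)) :
    ∃ L : Matrix n n 𝕜 →L[𝕜] Matrix n n 𝕜,
      HasFDerivAt (fun N => (a * N + b) * (c * N + d)⁻¹) L x ∧
      ∀ N, L N = (a - (a * x + b) * (c * x + d)⁻¹ * c) * N * (c * x + d)⁻¹ := by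
  let φ := toEuclideanCLM (n := n) (𝕜 := 𝕜)
  have hφ : ∀ M, φ M⁻¹ = Ring.inverse (φ M) := fun M => by
    rw [nonsing_inv_eq_ringInverse, map_ringInverse]
  have hF := _root_.hasFDerivAt_linearFractional (𝕜 := 𝕜) (φ a) (φ b) (φ c) (φ d) (φ x)
    (by simpa using hx.map φ)
  obtain ⟨L, hL, hLe⟩ := φ.toAlgEquiv.toLinearEquiv.exists_hasFDerivAt_of_conj
    (f := fun N => (a * N + b) * (c * N + d)⁻¹)
    (fun N => by
      simp only [AlgEquiv.toLinearEquiv_apply, StarAlgEquiv.coe_toAlgEquiv, map_mul, map_add, hφ])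
    hF
  refine ⟨L, hL, fun N => EquivLike.injective φ ?_⟩
  have hLN := hLe N
  rw [ContinuousLinearMap.mulLeftRight_apply] at hLN
  simp only [AlgEquiv.toLinearEquiv_apply, StarAlgEquiv.coe_toAlgEquiv] at hLN
  simp only [map_mul, map_sub, map_add, hφ]
  exact hLN

end Matrix

/-- let `A = [[a,b],[c,d]] ∈ U(2,2)`, `q` skew-Hermitian with `cq+d`
invertible, `p = (aq+b)(cq+d)⁻¹`, `a' = a − pc`. Then `(a')†(cq+d) = I₂`, and the
derivative of `f_{1,A}` at `q` is the map `N ↦ a' N (a')†`. -/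
theorem stmt15 (a b c d : M2)
    (hA : (fromBlocks a b c d : M4)ᴴ * gMat * fromBlocks a b c d = gMat)
    (q : M2) (hq : qᴴ = -q) (h : IsUnit (c * q + d)) :
    (a - (a * q + b) * (c * q + d)⁻¹ * c)ᴴ * (c * q + d) = 1 ∧
    ∃ L : M2 →L[ℂ] M2,
      HasFDerivAt (fun N : M2 => (a * N + b) * (c * N + d)⁻¹) L q ∧
      ∀ N : M2, L N = (a - (a * q + b) * (c * q + d)⁻¹ * c) * N *
        (a - (a * q + b) * (c * q + d)⁻¹ * c)ᴴ := by
  have hiso := conjTranspose_mul_add_conjTranspose_mul_eq_zero hA hq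
  have hpair := conjTranspose_mul_add_conjTranspose_mul_eq_one hA q
  have hunit := conjTranspose_sub_mul_inv_mul_mul_eq_one h hiso hpair
  obtain ⟨L, hL, hLN⟩ := Matrix.hasFDerivAt_linearFractional a b c d q h
  refine ⟨hunit, L, hL, fun N => ?_⟩
  rw [hLN, ← inv_eq_left_inv hunit]
end
end
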